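/- For every h ≥ 1, the map G : t ↦ (t^fix, t^free, ((v_j(t), t_j^spn(t)) : 1 ≤ j ≤ ℓ(t))) is a bijection from B_h, the set of full binary trees with refined Horton–Strahler number h, to the set B'_h = B_{⌈h/2⌉−1} × (⋃_{k=⌊h/2⌋}^{h−1} B_k) × ⋃_{ℓ≥0} ( ({1} × ⋃_{k=0}^{⌈h/2⌉−1} B_k) ∪ ({2} × ⋃_{k=0}^{⌊h/2⌋−1} B_k) )^ℓ. -/

import Mathlib

/-- Words over the alphabet {1,2}, encoded as lists of booleans (`false` = 1, `true` = 2). -/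
abbrev Word := List Bool

/-- Longest common prefix of two words (`u ∧ v`). -/
def lcp : Word → Word → Word
  | a :: as, b :: bs => if a = b then a :: lcp as bs else []
  | _, _ => []

/-- The lexicographic (strict) order on words; a strict prefix is smaller. -/
def wlex (u v : Word) : Prop := List.Lex (· < ·) u v

/-- A binary tree: a finite, prefix-closed set of words containing the empty word. -/
def IsBinaryTree (t : Set Word) : Prop :=
  t.Finite ∧ ([] : Word) ∈ t ∧ ∀ u ∈ t, ∀ v : Word, v <+: u → v ∈ t

/-- Fullness: each vertex has either zero or two children. -/
def IsFull (t : Set Word) : Prop :=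
  ∀ u ∈ t, (u ++ [false] ∈ t ↔ u ++ [true] ∈ t)

def IsFullBinaryTree (t : Set Word) : Prop := IsBinaryTree t ∧ IsFull t

/-- `φ` is an embedding of `t` into `t'`: injective on `t`, strictly increasing for the
lexicographic order, and preserving longest common prefixes. -/
def IsEmbedding (t t' : Set Word) (φ : Word → Word) : Prop :=
  (∀ u ∈ t, φ u ∈ t') ∧
  (∀ u ∈ t, ∀ v ∈ t, u ≠ v → φ u ≠ φ v) ∧
  (∀ u ∈ t, ∀ v ∈ t, wlex u v → wlex (φ u) (φ v)) ∧
  (∀ u ∈ t, ∀ v ∈ t, φ (lcp u v) = lcp (φ u) (φ v))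

/-- `t` can be embedded in `t'`. -/
def Embeds (t t' : Set Word) : Prop := ∃ φ, IsEmbedding t t' φ

/-- `graft b t = b · t`, the copy of `t` rooted at the child `b` of the root. -/
def graft (b : Bool) (t : Set Word) : Set Word := (fun w => b :: w) '' t

/-- The interpolating trees: τ₀ = {∅}, τ₁ = {∅,1,2},
τ_{2m} = {∅} ∪ 1·τ_m ∪ 2·τ_{m-1}, τ_{2m+1} = {∅} ∪ 1·τ_m ∪ 2·τ_m (for m ≥ 1). -/
def tau : ℕ → Set Word
  | 0 => {[]}
  | 1 => {[], [false], [true]}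
  | n + 2 => {[]} ∪ graft false (tau ((n + 2) / 2)) ∪ graft true (tau ((n + 1) / 2))
termination_by n => n
decreasing_by all_goals omega

/-- The subtree of `t` rooted at `u`: θ_u t = {v : uv ∈ t}. -/
def subtreeAt (u : Word) (t : Set Word) : Set Word := {v | u ++ v ∈ t}

/-- The refined Horton–Strahler number S(t) = max {r : τ_r embeds in t}. -/
noncomputable def RHS (t : Set Word) : ℕ := sSup {r | Embeds (tau r) t}

/-- S_u(t) = S(θ_u t). -/
noncomputable def Sv (u : Word) (t : Set Word) : ℕ := RHS (subtreeAt u t)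

/-- The set of internal vertices of `t` (those having a child in `t`). -/
def internals (t : Set Word) : Set Word :=
  {u | u ∈ t ∧ (u ++ [false] ∈ t ∨ u ++ [true] ∈ t)}

/-- `t` is a full binary tree with refined Horton–Strahler number `k` (i.e. `t ∈ B_k`). -/
def MemB (k : ℕ) (t : Set Word) : Prop := IsFullBinaryTree t ∧ RHS t = k

/-- The decomposition relation `G(t) = (t^fix, t^free, ((v_j, t_j^spn) : 1 ≤ j ≤ ℓ))`: `u` is the
lexicographically maximal vertex with `S_u(t) = h`, `t^free`/`t^fix` are the subtrees at the
children of `u` (sides according to the parity of `h`; `false` = 1, `true` = 2), and the `j`-th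
spinal datum is `(v_j, θ_{u_1…u_{j−1} v_j} t)` with `v_j = 3 − u_j` encoded as `! u_j`. -/
def TreeDecomp (h : ℕ) (t tfix tfree : Set Word) (spn : List (Bool × Set Word)) : Prop :=
  ∃ u : Word, u ∈ t ∧ Sv u t = h ∧ (∀ w ∈ t, Sv w t = h → w = u ∨ wlex w u) ∧
    tfree = subtreeAt (u ++ [decide (h % 2 = 1)]) t ∧
    tfix = subtreeAt (u ++ [decide (h % 2 = 0)]) t ∧
    spn = (List.finRange u.length).map
      (fun j => (! u.get j, subtreeAt (u.take (j : ℕ) ++ [! u.get j]) t))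

/-- Membership in `B'_h = B_{⌈h/2⌉−1} × (⋃_{k=⌊h/2⌋}^{h−1} B_k) ×
⋃_{ℓ≥0} (({1} × ⋃_{k=0}^{⌈h/2⌉−1} B_k) ∪ ({2} × ⋃_{k=0}^{⌊h/2⌋−1} B_k))^ℓ`
(`false` = label 1, `true` = label 2). -/
def MemB' (h : ℕ) (tfix tfree : Set Word) (spn : List (Bool × Set Word)) : Prop :=
  MemB ((h + 1) / 2 - 1) tfix ∧
  (∃ k, h / 2 ≤ k ∧ k ≤ h - 1 ∧ MemB k tfree) ∧
  ∀ p ∈ spn, ∃ k, MemB k p.2 ∧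
    (if p.1 then k + 1 ≤ h / 2 else k + 1 ≤ (h + 1) / 2)

/-!
An embedding of `τ_r` into a node either lands in one of the two subtrees, or sends the root to
the root and then, since `τ_r` is itself the node of `τ_{⌊r/2⌋}` and `τ_{⌊(r-1)/2⌋}`, embeds these
two into the two sides. Hence the refined Horton–Strahler number obeys a local recursion
`S(node t₁ t₂) = rhsStep (S t₁) (S t₂)`, and everything else is arithmetic with this recursion.

Along the path to the top vertex `u` every vertex has number `h`; at the `j`-th vertex the child on
the path has number `h`, and the recursion turns this into the bound on `S(t_j^spn)` defining
`B'_h`. At `u` both children are below `h`, and the recursion forces the parity pattern of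
`(S(t^fix), S(t^free))`. Conversely, grafting the spinal trees back along the path onto the node
with children `t^fix`, `t^free` gives a tree in `B_h` whose top vertex is the end of that path, and
every tree is recovered from its decomposition in this way.
-/

@[simp] lemma wlex_iff_lt {u v : Word} : wlex u v ↔ u < v := Iff.rfl

lemma lcp_nil_left (v : Word) : lcp [] v = [] := by cases v <;> rfl

lemma lcp_nil_right (u : Word) : lcp u [] = [] := by cases u <;> rfl

@[simp] lemma lcp_cons_self (a : Bool) (u v : Word) : lcp (a :: u) (a :: v) = a :: lcp u v := by
  simp [lcp]

lemma lcp_append (w u v : Word) : lcp (w ++ u) (w ++ v) = w ++ lcp u v := by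
  induction w with
  | nil => rfl
  | cons a w ih => simp [ih]

lemma lcp_eq_left_of_prefix {u v : Word} (h : u <+: v) : lcp u v = u := by
  obtain ⟨w, rfl⟩ := h
  simpa [lcp_nil_left] using lcp_append u [] w

lemma lcp_prefix_right (u v : Word) : lcp u v <+: v := by
  induction u generalizing v with
  | nil => simp [lcp_nil_left]
  | cons a u ih =>
    cases v with
    | nil => simp [lcp_nil_right]
    | cons b v =>
      by_cases hab : a = b
      · subst hab; simpa using ih v
      · simp [lcp, hab]

lemma lt_of_prefix_of_ne {u v : Word} (h : u <+: v) (hne : u ≠ v) : u < v := by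
  obtain ⟨w, rfl⟩ := h
  cases w with
  | nil => simp at hne
  | cons a w => simpa using List.append_left_lt (l₁ := u) (List.nil_lt_cons a w)

lemma lt_append_singleton (u : Word) (c : Bool) : u < u ++ [c] :=
  lt_of_prefix_of_ne (List.prefix_append u [c]) (by simp)

lemma head_eq_of_lcp_eq_nil {p q : Word} (hl : lcp p q = []) (hpq : p < q)
    (hp : p ≠ []) : ∃ p' q', p = false :: p' ∧ q = true :: q' := by
  match p, q, hp with
  | a :: p', [], _ => simp at hpq
  | a :: p', b :: q', _ =>
    have hab : a ≠ b := by rintro rfl; simp at hl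
    rcases List.cons_lt_cons_iff.mp hpq with h | h
    · revert h hab; cases a <;> cases b <;> simp
    · exact absurd h.1 hab

lemma isEmbedding_of_lt {s t : Set Word} {φ : Word → Word} (hmaps : ∀ u ∈ s, φ u ∈ t)
    (hlt : ∀ u ∈ s, ∀ v ∈ s, u < v → φ u < φ v)
    (hlcp : ∀ u ∈ s, ∀ v ∈ s, φ (lcp u v) = lcp (φ u) (φ v)) : IsEmbedding s t φ := by
  refine ⟨hmaps, fun u hu v hv hne => ?_, hlt, hlcp⟩
  rcases lt_or_gt_of_ne hne with h | h
  · exact (hlt u hu v hv h).ne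
  · exact (hlt v hv u hu h).ne'

lemma IsEmbedding.comp {s t r : Set Word} {φ ψ : Word → Word} (hφ : IsEmbedding s t φ)
    (hψ : IsEmbedding t r ψ) : IsEmbedding s r (ψ ∘ φ) := by
  obtain ⟨m₁, i₁, l₁, c₁⟩ := hφ
  obtain ⟨m₂, i₂, l₂, c₂⟩ := hψ
  refine ⟨fun u hu => m₂ _ (m₁ u hu), fun u hu v hv h => i₂ _ (m₁ u hu) _ (m₁ v hv) (i₁ u hu v hv h),
    fun u hu v hv h => l₂ _ (m₁ u hu) _ (m₁ v hv) (l₁ u hu v hv h), fun u hu v hv => ?_⟩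
  simp only [Function.comp, c₁ u hu v hv, c₂ _ (m₁ u hu) _ (m₁ v hv)]

lemma Embeds.trans {s t r : Set Word} : Embeds s t → Embeds t r → Embeds s r
  | ⟨_, hφ⟩, ⟨_, hψ⟩ => ⟨_, hφ.comp hψ⟩

@[simp] lemma mem_subtreeAt {u v : Word} {t : Set Word} : v ∈ subtreeAt u t ↔ u ++ v ∈ t :=
  Iff.rfl

lemma subtreeAt_append (u v : Word) (t : Set Word) :
    subtreeAt (u ++ v) t = subtreeAt v (subtreeAt u t) := by
  ext; simp

lemma subtreeAt_cons (c : Bool) (u : Word) (t : Set Word) :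
    subtreeAt (c :: u) t = subtreeAt u (subtreeAt [c] t) :=
  subtreeAt_append [c] u t

lemma subtreeAt_finite {t : Set Word} (ht : t.Finite) (u : Word) : (subtreeAt u t).Finite :=
  ht.preimage (List.append_right_injective u).injOn

lemma embeds_subtreeAt (w : Word) (t : Set Word) : Embeds (subtreeAt w t) t :=
  ⟨(w ++ ·), isEmbedding_of_lt (fun _ hu => hu) (fun _ _ _ _ h => List.append_left_lt h)
    (fun u _ v _ => (lcp_append w u v).symm)⟩

lemma IsEmbedding.prefix {s t : Set Word} {φ : Word → Word} (hφ : IsEmbedding s t φ)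
    {u v : Word} (hu : u ∈ s) (hv : v ∈ s) (huv : u <+: v) : φ u <+: φ v := by
  obtain ⟨-, -, -, hlcp⟩ := hφ
  have := hlcp u hu v hv
  rw [lcp_eq_left_of_prefix huv] at this
  exact this ▸ lcp_prefix_right _ _

lemma IsEmbedding.restrict_cons {s t : Set Word} {φ : Word → Word} (hφ : IsEmbedding s t φ)
    (c : Bool) : IsEmbedding (subtreeAt [c] s) t (fun x => φ (c :: x)) := by
  obtain ⟨m, -, l, lc⟩ := hφ
  refine isEmbedding_of_lt (fun x hx => m _ hx) (fun x hx y hy h => l _ hx _ hy (by simpa using h))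
    (fun x hx y hy => ?_)
  simpa using lc _ hx _ hy

lemma IsEmbedding.tail {s t : Set Word} {φ : Word → Word} {c : Bool} (hφ : IsEmbedding s t φ)
    (hc : ∀ x ∈ s, ∃ y, φ x = c :: y) : IsEmbedding s (subtreeAt [c] t) (fun x => (φ x).tail) := by
  obtain ⟨m, -, l, lc⟩ := hφ
  refine isEmbedding_of_lt (fun x hx => ?_) (fun x hx y hy h => ?_) (fun x hx y hy => ?_)
  · obtain ⟨x', hx'⟩ := hc x hx
    simpa [hx'] using m x hx
  · obtain ⟨x', hx'⟩ := hc x hx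
    obtain ⟨y', hy'⟩ := hc y hy
    simpa [hx', hy'] using l x hx y hy h
  · obtain ⟨x', hx'⟩ := hc x hx
    obtain ⟨y', hy'⟩ := hc y hy
    simp [lc x hx y hy, hx', hy']

def node (s₁ s₂ : Set Word) : Set Word := {[]} ∪ graft false s₁ ∪ graft true s₂

@[simp] lemma nil_mem_node (s₁ s₂ : Set Word) : [] ∈ node s₁ s₂ := by simp [node]

@[simp] lemma false_cons_mem_node {x : Word} {s₁ s₂ : Set Word} :
    false :: x ∈ node s₁ s₂ ↔ x ∈ s₁ := by
  simp [node, graft]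

@[simp] lemma true_cons_mem_node {x : Word} {s₁ s₂ : Set Word} :
    true :: x ∈ node s₁ s₂ ↔ x ∈ s₂ := by
  simp [node, graft]

@[simp] lemma subtreeAt_false_node (s₁ s₂ : Set Word) : subtreeAt [false] (node s₁ s₂) = s₁ := by
  ext; simp

@[simp] lemma subtreeAt_true_node (s₁ s₂ : Set Word) : subtreeAt [true] (node s₁ s₂) = s₂ := by
  ext; simp

lemma node_subtreeAt {t : Set Word} (ht : [] ∈ t) :
    node (subtreeAt [false] t) (subtreeAt [true] t) = t := by
  ext w
  rcases w with _ | ⟨_ | _, x⟩ <;> simp [ht]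

lemma node_finite {s₁ s₂ : Set Word} (h₁ : s₁.Finite) (h₂ : s₂.Finite) : (node s₁ s₂).Finite :=
  ((Set.finite_singleton _).union (h₁.image _)).union (h₂.image _)

lemma ncard_node {s₁ s₂ : Set Word} (h₁ : s₁.Finite) (h₂ : s₂.Finite) :
    (node s₁ s₂).ncard = s₁.ncard + s₂.ncard + 1 := by
  have hg : ∀ (c : Bool) (s : Set Word), (graft c s).ncard = s.ncard := fun c s =>
    Set.ncard_image_of_injective _ (List.cons_injective)
  have hd : Disjoint (graft false s₁) (graft true s₂) := by
    simp [Set.disjoint_left, graft]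
  have hd' : Disjoint ({[]} : Set Word) (graft false s₁ ∪ graft true s₂) := by
    simp [graft]
  rw [node, Set.union_assoc, Set.ncard_union_eq hd' (Set.finite_singleton _)
    ((h₁.image _).union (h₂.image _)), Set.ncard_union_eq hd (h₁.image _) (h₂.image _), hg, hg,
    Set.ncard_singleton]
  omega

def nodeMap (φ₁ φ₂ : Word → Word) : Word → Word
  | [] => []
  | false :: x => false :: φ₁ x
  | true :: x => true :: φ₂ x

lemma isEmbedding_nodeMap {s₁ s₂ t₁ t₂ : Set Word} {φ₁ φ₂ : Word → Word}
    (h₁ : IsEmbedding s₁ t₁ φ₁) (h₂ : IsEmbedding s₂ t₂ φ₂) :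
    IsEmbedding (node s₁ s₂) (node t₁ t₂) (nodeMap φ₁ φ₂) := by
  obtain ⟨m₁, -, l₁, c₁⟩ := h₁
  obtain ⟨m₂, -, l₂, c₂⟩ := h₂
  refine isEmbedding_of_lt ?_ ?_ ?_
  · rintro (_ | ⟨_ | _, x⟩) hx <;> simp_all [nodeMap]
  · rintro (_ | ⟨_ | _, x⟩) hx (_ | ⟨_ | _, y⟩) hy h <;>
      simp_all [nodeMap, List.cons_lt_cons_iff]
  · rintro (_ | ⟨_ | _, x⟩) hx (_ | ⟨_ | _, y⟩) hy <;>
      simp_all [nodeMap, lcp, lcp_nil_left, lcp_nil_right]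

lemma embeds_node_of_embeds {s₁ s₂ t₁ t₂ : Set Word} :
    Embeds s₁ t₁ → Embeds s₂ t₂ → Embeds (node s₁ s₂) (node t₁ t₂)
  | ⟨_, h₁⟩, ⟨_, h₂⟩ => ⟨_, isEmbedding_nodeMap h₁ h₂⟩

lemma IsEmbedding.embeds_subtreeAt_of_cons_prefix {s t : Set Word} {φ : Word → Word}
    (hφ : IsEmbedding s t φ) {c : Bool} {w : Word} (hroot : ∀ x ∈ s, c :: w <+: φ x) :
    Embeds s (subtreeAt [c] t) := by
  refine ⟨_, hφ.tail fun x hx => ?_⟩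
  obtain ⟨r, hr⟩ := hroot x hx
  exact ⟨w ++ r, hr.symm⟩

lemma embeds_node_cases {s₁ s₂ t : Set Word} (hs₁ : [] ∈ s₁) (hs₂ : [] ∈ s₂)
    (h : Embeds (node s₁ s₂) t) :
    Embeds (node s₁ s₂) (subtreeAt [false] t) ∨ Embeds (node s₁ s₂) (subtreeAt [true] t) ∨
      (Embeds s₁ (subtreeAt [false] t) ∧ Embeds s₂ (subtreeAt [true] t)) := by
  obtain ⟨φ, hφ⟩ := h
  obtain ⟨-, hinj, hlt, hlcp⟩ := id hφ
  have hnil := nil_mem_node s₁ s₂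
  rcases hroot : φ [] with _ | ⟨c, w⟩
  · have hf : [false] ∈ node s₁ s₂ := by simpa using hs₁
    have ht : [true] ∈ node s₁ s₂ := by simpa using hs₂
    have hlcp_nil : lcp (φ [false]) (φ [true]) = [] := by
      rw [← hlcp _ hf _ ht]; simpa [lcp] using hroot
    have hne : φ [false] ≠ [] := fun h => hinj _ hf _ hnil (by simp) (h.trans hroot.symm)
    obtain ⟨p, q, hp, hq⟩ :=
      head_eq_of_lcp_eq_nil hlcp_nil (hlt _ hf _ ht (List.Lex.rel rfl)) hne
    have hside : ∀ (c : Bool) (r : Word), [c] ∈ node s₁ s₂ → φ [c] = c :: r →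
        Embeds (subtreeAt [c] (node s₁ s₂)) (subtreeAt [c] t) := fun c r hc hr =>
      (hφ.restrict_cons c).embeds_subtreeAt_of_cons_prefix (w := r) fun x hx =>
        hr ▸ hφ.prefix hc hx (by simp)
    exact Or.inr (Or.inr ⟨by simpa using hside false p hf hp, by simpa using hside true q ht hq⟩)
  · have hc : Embeds (node s₁ s₂) (subtreeAt [c] t) :=
      hφ.embeds_subtreeAt_of_cons_prefix fun x hx => hroot ▸ hφ.prefix hnil hx List.nil_prefix
    cases c
    · exact Or.inl hc
    · exact Or.inr (Or.inl hc)

lemma tau_eq_node {r : ℕ} (hr : 1 ≤ r) : tau r = node (tau (r / 2)) (tau ((r - 1) / 2)) := by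
  match r, hr with
  | 1, _ =>
    ext w
    rcases w with _ | ⟨_ | _, _ | _⟩ <;> simp [tau, node, graft]
  | n + 2, _ => rw [tau]; rfl

lemma nil_mem_tau (r : ℕ) : [] ∈ tau r := by
  rcases Nat.eq_zero_or_pos r with rfl | hr
  · simp [tau]
  · simp [tau_eq_node hr]

lemma tau_finite (r : ℕ) : (tau r).Finite := by
  induction r using Nat.strong_induction_on with
  | _ r ih =>
    rcases Nat.eq_zero_or_pos r with rfl | hr
    · simp [tau]
    · rw [tau_eq_node hr]
      exact node_finite (ih _ (by omega)) (ih _ (by omega))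

lemma le_ncard_tau (r : ℕ) : r + 1 ≤ (tau r).ncard := by
  induction r using Nat.strong_induction_on with
  | _ r ih =>
    rcases Nat.eq_zero_or_pos r with rfl | hr
    · simp [tau]
    · rw [tau_eq_node hr, ncard_node (tau_finite _) (tau_finite _)]
      have := ih (r / 2) (by omega)
      have := ih ((r - 1) / 2) (by omega)
      omega

lemma embeds_refl (t : Set Word) : Embeds t t :=
  ⟨id, isEmbedding_of_lt (fun _ h => h) (fun _ _ _ _ h => h) (fun _ _ _ _ => rfl)⟩

lemma embeds_tau_zero {t : Set Word} (ht : [] ∈ t) : Embeds (tau 0) t :=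
  ⟨id, isEmbedding_of_lt (by simpa [tau] using ht) (by simp [tau]) (fun _ _ _ _ => rfl)⟩

lemma tau_embeds_tau {i j : ℕ} (hij : i ≤ j) : Embeds (tau i) (tau j) := by
  induction j using Nat.strong_induction_on generalizing i with
  | _ j ih =>
    rcases hij.eq_or_lt with rfl | hlt
    · exact embeds_refl _
    rcases Nat.eq_zero_or_pos i with rfl | hi
    · exact embeds_tau_zero (nil_mem_tau j)
    rw [tau_eq_node hi, tau_eq_node (by omega : 1 ≤ j)]
    exact embeds_node_of_embeds (ih _ (by omega) (by omega)) (ih _ (by omega) (by omega))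

lemma add_one_le_ncard_of_embeds {t : Set Word} (ht : t.Finite) {r : ℕ}
    (h : Embeds (tau r) t) : r + 1 ≤ t.ncard := by
  obtain ⟨φ, hmaps, hinj, -, -⟩ := h
  have hinj' : Set.InjOn φ (tau r) := fun a ha b hb hab => by_contra fun hne => hinj a ha b hb hne hab
  calc r + 1 ≤ (tau r).ncard := le_ncard_tau r
    _ = (φ '' tau r).ncard := hinj'.ncard_image.symm
    _ ≤ t.ncard := Set.ncard_le_ncard (Set.image_subset_iff.mpr hmaps) ht

lemma bddAbove_embeds_tau {t : Set Word} (ht : t.Finite) : BddAbove {r | Embeds (tau r) t} :=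
  ⟨t.ncard, fun _ hr => by have := add_one_le_ncard_of_embeds ht hr; omega⟩

lemma le_RHS {t : Set Word} (ht : t.Finite) {r : ℕ} (h : Embeds (tau r) t) : r ≤ RHS t :=
  le_csSup (bddAbove_embeds_tau ht) h

lemma RHS_le {t : Set Word} {n : ℕ} (h : ∀ r, Embeds (tau r) t → r ≤ n) : RHS t ≤ n :=
  csSup_le' h

lemma embeds_tau_iff_le_RHS {t : Set Word} (ht : t.Finite) (hnil : [] ∈ t) {r : ℕ} :
    Embeds (tau r) t ↔ r ≤ RHS t := by
  refine ⟨le_RHS ht, fun hr => (tau_embeds_tau hr).trans ?_⟩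
  exact Nat.sSup_mem ⟨0, embeds_tau_zero hnil⟩ (bddAbove_embeds_tau ht)

lemma RHS_subtreeAt_le {t : Set Word} (ht : t.Finite) (w : Word) : RHS (subtreeAt w t) ≤ RHS t :=
  RHS_le fun _ hr => le_RHS ht (hr.trans (embeds_subtreeAt w t))

def rhsStep (a b : ℕ) : ℕ := max (max a b) (max (2 * min a (b + 1)) (2 * min a b + 1))

lemma le_rhsStep_iff {a b r : ℕ} :
    r ≤ rhsStep a b ↔ r ≤ a ∨ r ≤ b ∨ (r / 2 ≤ a ∧ (r - 1) / 2 ≤ b) := by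
  simp only [rhsStep]
  omega

lemma embeds_tau_node_iff {s₁ s₂ : Set Word} (hs₁ : [] ∈ s₁) {r : ℕ} :
    Embeds (tau r) (node s₁ s₂) ↔ Embeds (tau r) s₁ ∨ Embeds (tau r) s₂ ∨
      (Embeds (tau (r / 2)) s₁ ∧ Embeds (tau ((r - 1) / 2)) s₂) := by
  rcases Nat.eq_zero_or_pos r with rfl | hr
  · exact iff_of_true (embeds_tau_zero (nil_mem_node _ _)) (Or.inl (embeds_tau_zero hs₁))
  constructor
  · intro h
    rw [tau_eq_node hr] at h ⊢
    simpa using embeds_node_cases (nil_mem_tau _) (nil_mem_tau _) h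
  · rintro (h | h | ⟨h₁, h₂⟩)
    · exact h.trans (by simpa using embeds_subtreeAt [false] (node s₁ s₂))
    · exact h.trans (by simpa using embeds_subtreeAt [true] (node s₁ s₂))
    · rw [tau_eq_node hr]
      exact embeds_node_of_embeds h₁ h₂

lemma RHS_node {s₁ s₂ : Set Word} (h₁ : s₁.Finite) (h₂ : s₂.Finite) (hs₁ : [] ∈ s₁)
    (hs₂ : [] ∈ s₂) : RHS (node s₁ s₂) = rhsStep (RHS s₁) (RHS s₂) := by
  refine eq_of_forall_le_iff fun r => ?_
  rw [← embeds_tau_iff_le_RHS (node_finite h₁ h₂) (nil_mem_node _ _), embeds_tau_node_iff hs₁,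
    le_rhsStep_iff]
  simp only [embeds_tau_iff_le_RHS h₁ hs₁, embeds_tau_iff_le_RHS h₂ hs₂]

lemma IsBinaryTree.mem_of_prefix {t : Set Word} (ht : IsBinaryTree t) {u v : Word} (hu : u ∈ t)
    (hvu : v <+: u) : v ∈ t :=
  ht.2.2 u hu v hvu

lemma IsFullBinaryTree.finite {t : Set Word} (ht : IsFullBinaryTree t) : t.Finite := ht.1.1

lemma IsFullBinaryTree.nil_mem {t : Set Word} (ht : IsFullBinaryTree t) : [] ∈ t := ht.1.2.1

lemma IsFullBinaryTree.node {s₁ s₂ : Set Word} (h₁ : IsFullBinaryTree s₁)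
    (h₂ : IsFullBinaryTree s₂) : IsFullBinaryTree (node s₁ s₂) := by
  obtain ⟨⟨hfin₁, hnil₁, hpre₁⟩, hfull₁⟩ := h₁
  obtain ⟨⟨hfin₂, hnil₂, hpre₂⟩, hfull₂⟩ := h₂
  refine ⟨⟨node_finite hfin₁ hfin₂, nil_mem_node _ _, ?_⟩, ?_⟩
  · rintro (_ | ⟨c, x⟩) hx (_ | ⟨b, y⟩) hyx
    · exact nil_mem_node _ _
    · simp at hyx
    · exact nil_mem_node _ _
    · rw [List.cons_prefix_cons] at hyx
      obtain ⟨rfl, hyx⟩ := hyx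
      cases b
      · simpa using hpre₁ x (by simpa using hx) y hyx
      · simpa using hpre₂ x (by simpa using hx) y hyx
  · rintro (_ | ⟨_ | _, x⟩) hx
    · simp [hnil₁, hnil₂]
    · simpa using hfull₁ x (by simpa using hx)
    · simpa using hfull₂ x (by simpa using hx)

lemma IsFullBinaryTree.subtree {t : Set Word} (ht : IsFullBinaryTree t) {u : Word}
    (hu : u ∈ t) : IsFullBinaryTree (subtreeAt u t) := by
  obtain ⟨⟨hfin, -, hpre⟩, hfull⟩ := ht
  refine ⟨⟨subtreeAt_finite hfin u, by simpa using hu, ?_⟩, ?_⟩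
  · intro v hv w hwv
    exact hpre _ hv _ ((List.prefix_append_right_inj u).mpr hwv)
  · intro v hv
    simpa using hfull _ hv

def nodeAt (c : Bool) (s o : Set Word) : Set Word := cond c (node o s) (node s o)

def rhsStepAt (c : Bool) (x y : ℕ) : ℕ := cond c (rhsStep y x) (rhsStep x y)

@[simp] lemma subtreeAt_nodeAt_self (c : Bool) (s o : Set Word) :
    subtreeAt [c] (nodeAt c s o) = s := by
  cases c <;> simp [nodeAt]

@[simp] lemma subtreeAt_nodeAt_not (c : Bool) (s o : Set Word) :
    subtreeAt [!c] (nodeAt c s o) = o := by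
  cases c <;> simp [nodeAt]

@[simp] lemma subtreeAt_not_nodeAt (c : Bool) (s o : Set Word) :
    subtreeAt [c] (nodeAt (!c) s o) = o := by
  cases c <;> simp [nodeAt]

lemma nodeAt_subtreeAt {t : Set Word} (ht : [] ∈ t) (c : Bool) :
    nodeAt c (subtreeAt [c] t) (subtreeAt [!c] t) = t := by
  cases c <;> simp [nodeAt, node_subtreeAt ht]

lemma IsFullBinaryTree.nodeAt (c : Bool) {s o : Set Word} (hs : IsFullBinaryTree s)
    (ho : IsFullBinaryTree o) : IsFullBinaryTree (nodeAt c s o) := by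
  cases c
  exacts [hs.node ho, ho.node hs]

lemma RHS_nodeAt (c : Bool) {s o : Set Word} (hs : s.Finite) (ho : o.Finite) (hs' : [] ∈ s)
    (ho' : [] ∈ o) : RHS (nodeAt c s o) = rhsStepAt c (RHS s) (RHS o) := by
  cases c
  exacts [RHS_node hs ho hs' ho', RHS_node ho hs ho' hs']

lemma IsFullBinaryTree.singleton_mem {t : Set Word} (ht : IsFullBinaryTree t)
    (hpos : 1 ≤ RHS t) (c : Bool) : [c] ∈ t := by
  obtain ⟨⟨hfin, hnil, hpre⟩, hfull⟩ := ht
  have h2 : 1 < t.ncard :=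
    add_one_le_ncard_of_embeds hfin ((embeds_tau_iff_le_RHS hfin hnil).mpr hpos)
  obtain ⟨_ | ⟨b, x⟩, hw, hne⟩ := Set.exists_ne_of_one_lt_ncard h2 []
  · exact absurd rfl hne
  have hb : [b] ∈ t := hpre _ hw [b] (by simp)
  have hroot := hfull [] hnil
  cases b <;> cases c <;> simp_all

lemma Sv_append (u v : Word) (t : Set Word) : Sv (u ++ v) t = Sv v (subtreeAt u t) := by
  rw [Sv, Sv, subtreeAt_append]

lemma Sv_cons (c : Bool) (u : Word) (t : Set Word) : Sv (c :: u) t = Sv u (subtreeAt [c] t) :=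
  Sv_append [c] u t

lemma Sv_le_RHS {t : Set Word} (ht : t.Finite) (w : Word) : Sv w t ≤ RHS t :=
  RHS_subtreeAt_le ht w

lemma Sv_le_Sv_of_prefix {t : Set Word} (ht : t.Finite) {w u : Word} (h : w <+: u) :
    Sv u t ≤ Sv w t := by
  obtain ⟨v, rfl⟩ := h
  rw [Sv_append]
  exact Sv_le_RHS (subtreeAt_finite ht w) v

lemma IsFullBinaryTree.append_singleton_mem {t : Set Word} (ht : IsFullBinaryTree t) {v : Word}
    (hv : v ∈ t) (hpos : 1 ≤ Sv v t) (c : Bool) : v ++ [c] ∈ t :=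
  (ht.subtree hv).singleton_mem hpos c

lemma IsFullBinaryTree.Sv_eq_rhsStepAt {t : Set Word} (ht : IsFullBinaryTree t) {v : Word}
    (hv : v ∈ t) (hpos : 1 ≤ Sv v t) (c : Bool) :
    Sv v t = rhsStepAt c (Sv (v ++ [c]) t) (Sv (v ++ [!c]) t) := by
  have hT := ht.subtree hv
  have hfin : ∀ b : Bool, (subtreeAt [b] (subtreeAt v t)).Finite := fun b =>
    (hT.subtree (hT.singleton_mem hpos b)).finite
  have hnil : ∀ b : Bool, [] ∈ subtreeAt [b] (subtreeAt v t) := fun b => by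
    simpa using hT.singleton_mem hpos b
  rw [Sv_append, Sv_append, Sv, Sv, Sv, ← RHS_nodeAt c (hfin c) (hfin !c) (hnil c) (hnil !c),
    nodeAt_subtreeAt hT.nil_mem]

lemma rhsStepAt_self_eq_iff (c : Bool) (h k : ℕ) :
    rhsStepAt c h k = h ↔ if !c then k + 1 ≤ h / 2 else k + 1 ≤ (h + 1) / 2 := by
  cases c <;> simp [rhsStepAt, rhsStep] <;> omega

lemma rhsStepAt_parity_eq_iff {h x y : ℕ} (hx : x < h) (hy : y < h) :
    rhsStepAt (decide (h % 2 = 0)) x y = h ↔ x = (h + 1) / 2 - 1 ∧ h / 2 ≤ y := by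
  rcases Nat.mod_two_eq_zero_or_one h with hp | hp <;>
    simp [hp, rhsStepAt, rhsStep] <;> omega

lemma decide_mod_two_eq_one (h : ℕ) : decide (h % 2 = 1) = !decide (h % 2 = 0) := by
  rcases Nat.mod_two_eq_zero_or_one h with hp | hp <;> simp [hp]

-- `spineData u t` is the sequence `((v_j, t_j^spn))_{j ≤ |u|}`, computed letter by letter.
def spineData : Word → Set Word → List (Bool × Set Word)
  | [], _ => []
  | c :: u, t => (!c, subtreeAt [!c] t) :: spineData u (subtreeAt [c] t)

def spine (spn : List (Bool × Set Word)) : Word := spn.map (fun p => !p.1)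

def build : List (Bool × Set Word) → Set Word → Set Word
  | [], core => core
  | p :: spn, core => nodeAt (!p.1) (build spn core) p.2

lemma spineData_eq_map (u : Word) (t : Set Word) :
    spineData u t = (List.finRange u.length).map
      (fun j => (!u.get j, subtreeAt (u.take j ++ [!u.get j]) t)) := by
  induction u generalizing t with
  | nil => rfl
  | cons c u ih =>
    simp [spineData, ih, List.finRange_succ, ← subtreeAt_append]

lemma mem_spineData {u : Word} {t : Set Word} {p : Bool × Set Word} (hp : p ∈ spineData u t) :
    ∃ v c, v ++ [c] <+: u ∧ p = (!c, subtreeAt (v ++ [!c]) t) := by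
  induction u generalizing t with
  | nil => simp [spineData] at hp
  | cons c u ih =>
    rcases List.mem_cons.mp hp with rfl | hp
    · exact ⟨[], c, by simp, rfl⟩
    · obtain ⟨v, b, hvb, rfl⟩ := ih hp
      exact ⟨c :: v, b, by simpa using hvb, by rw [List.cons_append, subtreeAt_cons c (v ++ [!b]) t]⟩

lemma build_spineData {u : Word} {t : Set Word} (hu : ∀ v, v <+: u → v ∈ t) :
    build (spineData u t) (subtreeAt u t) = t := by
  induction u generalizing t with
  | nil => rfl
  | cons c u ih =>
    have hsub : ∀ v, v <+: u → v ∈ subtreeAt [c] t := fun v hv =>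
      hu (c :: v) (List.cons_prefix_cons.mpr ⟨rfl, hv⟩)
    rw [spineData, build, Bool.not_not, subtreeAt_cons c u t, ih hsub]
    exact nodeAt_subtreeAt (hu [] List.nil_prefix) c

@[simp] lemma spine_cons (p : Bool × Set Word) (spn : List (Bool × Set Word)) :
    spine (p :: spn) = (!p.1) :: spine spn := rfl

lemma subtreeAt_spine_build (spn : List (Bool × Set Word)) (core : Set Word) :
    subtreeAt (spine spn) (build spn core) = core := by
  induction spn with
  | nil => rfl
  | cons p spn ih => rw [spine_cons, subtreeAt_cons, build, subtreeAt_nodeAt_self, ih]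

lemma spineData_spine_build (spn : List (Bool × Set Word)) (core : Set Word) :
    spineData (spine spn) (build spn core) = spn := by
  induction spn with
  | nil => rfl
  | cons p spn ih => simp [spineData, build, ih]

lemma IsFullBinaryTree.build {core : Set Word} (hcore : IsFullBinaryTree core)
    {spn : List (Bool × Set Word)} (hspn : ∀ p ∈ spn, IsFullBinaryTree p.2) :
    IsFullBinaryTree (_root_.build spn core) := by
  induction spn with
  | nil => exact hcore
  | cons p spn ih =>
    exact (ih fun q hq => hspn q (List.mem_cons_of_mem p hq)).nodeAt _ (hspn p List.mem_cons_self)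

lemma RHS_build {core : Set Word} (hcore : IsFullBinaryTree core) {spn : List (Bool × Set Word)}
    (hspn : ∀ p ∈ spn, IsFullBinaryTree p.2 ∧ rhsStepAt (!p.1) (RHS core) (RHS p.2) = RHS core) :
    RHS (build spn core) = RHS core := by
  induction spn with
  | nil => rfl
  | cons p spn ih =>
    have hrest : ∀ q ∈ spn, IsFullBinaryTree q.2 := fun q hq =>
      (hspn q (List.mem_cons_of_mem p hq)).1
    obtain ⟨hp, hstep⟩ := hspn p List.mem_cons_self
    have hT := hcore.build hrest
    rw [build, RHS_nodeAt _ hT.finite hp.finite hT.nil_mem hp.nil_mem,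
      ih fun q hq => hspn q (List.mem_cons_of_mem p hq), hstep]

lemma prefix_spine_of_Sv_build_eq {h : ℕ} {core : Set Word} (hcore : ∀ w, Sv w core = h → w = [])
    {spn : List (Bool × Set Word)} (hspn : ∀ p ∈ spn, p.2.Finite ∧ RHS p.2 < h) :
    ∀ w, Sv w (build spn core) = h → w <+: spine spn := by
  induction spn with
  | nil => intro w hw; simp [hcore w hw]
  | cons p spn ih =>
    rintro (_ | ⟨b, w⟩) hw
    · exact List.nil_prefix
    rw [Sv_cons, build] at hw
    rcases Bool.eq_or_eq_not b (!p.1) with rfl | rfl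
    · rw [subtreeAt_nodeAt_self] at hw
      exact List.cons_prefix_cons.mpr ⟨rfl, ih (fun q hq => hspn q (List.mem_cons_of_mem p hq)) w hw⟩
    · rw [subtreeAt_nodeAt_not] at hw
      obtain ⟨hfin, hlt⟩ := hspn p List.mem_cons_self
      exact absurd (hw ▸ Sv_le_RHS hfin w) (by omega)

lemma TreeDecomp.unique {h : ℕ} {t a b a' b' : Set Word} {spn spn' : List (Bool × Set Word)}
    (hd : TreeDecomp h t a b spn) (hd' : TreeDecomp h t a' b' spn') :
    (a, b, spn) = (a', b', spn') := by
  obtain ⟨u, hu, hSu, hmax, rfl, rfl, rfl⟩ := hd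
  obtain ⟨u', hu', hSu', hmax', rfl, rfl, rfl⟩ := hd'
  obtain rfl : u = u' := by
    rcases hmax u' hu' hSu' with h₁ | h₁
    · exact h₁.symm
    rcases hmax' u hu hSu with h₂ | h₂
    · exact h₂
    exact (List.lt_asymm h₁ h₂).elim
  rfl

lemma existsUnique_treeDecomp {h : ℕ} {t : Set Word} (ht : MemB h t) :
    ∃! x : Set Word × Set Word × List (Bool × Set Word), TreeDecomp h t x.1 x.2.1 x.2.2 := by
  obtain ⟨⟨⟨hfin, hnil, -⟩, -⟩, hR⟩ := ht
  obtain ⟨u, ⟨hu, hSu⟩, hmax⟩ := Set.exists_max_image {w | w ∈ t ∧ Sv w t = h} id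
    (hfin.subset fun _ hw => hw.1) ⟨[], hnil, hR⟩
  have hd : TreeDecomp h t _ _ _ := ⟨u, hu, hSu, fun w hw hSw => eq_or_lt_of_le (hmax w ⟨hw, hSw⟩),
    rfl, rfl, rfl⟩
  exact ⟨(_, _, _), hd, fun x hx => hx.unique hd⟩

lemma TreeDecomp.memB' {h : ℕ} (hh : 1 ≤ h) {t tfix tfree : Set Word}
    {spn : List (Bool × Set Word)} (ht : MemB h t) (hd : TreeDecomp h t tfix tfree spn) :
    MemB' h tfix tfree spn := by
  obtain ⟨ht, hR⟩ := ht
  obtain ⟨u, hu, hSu, hmax, rfl, rfl, rfl⟩ := hd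
  have hfin := ht.finite
  have hspine : ∀ v, v <+: u → v ∈ t ∧ Sv v t = h := fun v hv =>
    ⟨ht.1.mem_of_prefix hu hv, le_antisymm (hR ▸ Sv_le_RHS hfin v) (hSu ▸ Sv_le_Sv_of_prefix hfin hv)⟩
  have hchild : ∀ b, u ++ [b] ∈ t := ht.append_singleton_mem hu (hSu ▸ hh)
  have hchild_lt : ∀ b, Sv (u ++ [b]) t < h := fun b => by
    refine lt_of_le_of_ne (hR ▸ Sv_le_RHS hfin _) fun hb => ?_
    rcases hmax _ (hchild b) hb with heq | hlt
    · simp at heq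
    · exact List.lt_asymm hlt (lt_append_singleton u b)
  set c := decide (h % 2 = 0)
  have hcore := (rhsStepAt_parity_eq_iff (hchild_lt c) (hchild_lt !c)).mp
    ((ht.Sv_eq_rhsStepAt hu (hSu ▸ hh) c).symm.trans hSu)
  refine ⟨⟨ht.subtree (hchild c), hcore.1⟩, ?_, fun p hp => ?_⟩
  · rw [decide_mod_two_eq_one]
    exact ⟨_, hcore.2, Nat.le_sub_one_of_lt (hchild_lt _), ht.subtree (hchild _), rfl⟩
  obtain ⟨v, b, hvb, rfl⟩ := mem_spineData (spineData_eq_map u t ▸ hp)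
  obtain ⟨hv, hSv⟩ := hspine v ((List.prefix_append v [b]).trans hvb)
  have hstep := ht.Sv_eq_rhsStepAt hv (hSv ▸ hh) b
  rw [hSv, (hspine _ hvb).2] at hstep
  exact ⟨_, ⟨ht.subtree (ht.append_singleton_mem hv (hSv ▸ hh) (!b)), rfl⟩,
    (rhsStepAt_self_eq_iff b h _).mp hstep.symm⟩

lemma TreeDecomp.eq_build {h : ℕ} {t tfix tfree : Set Word} {spn : List (Bool × Set Word)}
    (ht : IsBinaryTree t) (hd : TreeDecomp h t tfix tfree spn) :
    t = build spn (nodeAt (decide (h % 2 = 0)) tfix tfree) := by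
  obtain ⟨u, hu, -, -, rfl, rfl, rfl⟩ := hd
  rw [← spineData_eq_map, decide_mod_two_eq_one, subtreeAt_append, subtreeAt_append,
    nodeAt_subtreeAt (by simpa using hu), build_spineData fun v hv => ht.mem_of_prefix hu hv]

lemma eq_nil_of_Sv_eq_RHS {t : Set Word} (ht : t.Finite)
    (hlt : ∀ b, RHS (subtreeAt [b] t) < RHS t) : ∀ w, Sv w t = RHS t → w = []
  | [], _ => rfl
  | b :: w, hw => by
    have := Sv_le_RHS (subtreeAt_finite ht [b]) w
    have := hlt b
    rw [Sv_cons] at hw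
    omega

lemma memB_nodeAt_parity {h : ℕ} (hh : 1 ≤ h) {tfix tfree : Set Word}
    (hfix : MemB ((h + 1) / 2 - 1) tfix) (hfree : ∃ k, h / 2 ≤ k ∧ k ≤ h - 1 ∧ MemB k tfree) :
    MemB h (nodeAt (decide (h % 2 = 0)) tfix tfree) ∧
      ∀ w, Sv w (nodeAt (decide (h % 2 = 0)) tfix tfree) = h → w = [] := by
  obtain ⟨hfix, hRfix⟩ := hfix
  obtain ⟨k, hk₁, hk₂, hfree, rfl⟩ := hfree
  set c := decide (h % 2 = 0)
  have hR : RHS (nodeAt c tfix tfree) = h := by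
    rw [RHS_nodeAt c hfix.finite hfree.finite hfix.nil_mem hfree.nil_mem]
    exact (rhsStepAt_parity_eq_iff (by omega) (by omega)).mpr ⟨hRfix, hk₁⟩
  have hT := hfix.nodeAt c hfree
  refine ⟨⟨hT, hR⟩, hR ▸ eq_nil_of_Sv_eq_RHS hT.finite fun b => ?_⟩
  rcases Bool.eq_or_eq_not b c with rfl | rfl <;> simp <;> omega

lemma memB_build_and_treeDecomp {h : ℕ} (hh : 1 ≤ h) {tfix tfree : Set Word}
    {spn : List (Bool × Set Word)} (hB : MemB' h tfix tfree spn) :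
    MemB h (build spn (nodeAt (decide (h % 2 = 0)) tfix tfree)) ∧
      TreeDecomp h (build spn (nodeAt (decide (h % 2 = 0)) tfix tfree)) tfix tfree spn := by
  obtain ⟨hfix, hfree, hspn⟩ := hB
  obtain ⟨⟨hcore, hRcore⟩, hcore_top⟩ := memB_nodeAt_parity hh hfix hfree
  set core := nodeAt (decide (h % 2 = 0)) tfix tfree
  have hspn' : ∀ p ∈ spn, IsFullBinaryTree p.2 ∧ rhsStepAt (!p.1) h (RHS p.2) = h ∧ RHS p.2 < h :=
    fun p hp => by
      obtain ⟨k, ⟨hp, rfl⟩, hk⟩ := hspn p hp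
      exact ⟨hp, (rhsStepAt_self_eq_iff _ _ _).mpr (by simpa using hk), by split_ifs at hk <;> omega⟩
  have hsub := subtreeAt_spine_build spn core
  have hu : spine spn ∈ build spn core := by
    simpa using (hsub.symm ▸ hcore.nil_mem : [] ∈ subtreeAt (spine spn) (build spn core))
  refine ⟨⟨hcore.build fun p hp => (hspn' p hp).1, ?_⟩, spine spn, hu, by rw [Sv, hsub, hRcore],
    fun w _ hw => ?_, ?_, ?_, ?_⟩
  · rw [RHS_build hcore (by rw [hRcore]; exact fun p hp => ⟨(hspn' p hp).1, (hspn' p hp).2.1⟩),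
      hRcore]
  · have := prefix_spine_of_Sv_build_eq hcore_top
      (fun p hp => ⟨(hspn' p hp).1.finite, (hspn' p hp).2.2⟩) w hw
    exact (eq_or_ne w _).imp_right (lt_of_prefix_of_ne this)
  · rw [subtreeAt_append, hsub, decide_mod_two_eq_one, subtreeAt_nodeAt_not]
  · rw [subtreeAt_append, hsub, subtreeAt_nodeAt_self]
  · rw [← spineData_eq_map, spineData_spine_build]

/-- For every `h ≥ 1`, the map `G : t ↦ (t^fix, t^free, ((v_j, t_j^spn))_{j≤ℓ})` is a
bijection from `B_h` to `B'_h`: it is well defined on `B_h`, takes values in `B'_h`,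
and every element of `B'_h` has a unique preimage in `B_h`. -/
theorem tree_decomposition_bijection (h : ℕ) (hh : 1 ≤ h) :
    (∀ t, MemB h t → ∃! x : Set Word × Set Word × List (Bool × Set Word),
      TreeDecomp h t x.1 x.2.1 x.2.2) ∧
    (∀ t tfix tfree spn, MemB h t → TreeDecomp h t tfix tfree spn →
      MemB' h tfix tfree spn) ∧
    (∀ tfix tfree spn, MemB' h tfix tfree spn →
      ∃! t, MemB h t ∧ TreeDecomp h t tfix tfree spn) := by
  refine ⟨fun t ht => existsUnique_treeDecomp ht, fun t _ _ _ ht hd => hd.memB' hh ht,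
    fun tfix tfree spn hB => ⟨_, memB_build_and_treeDecomp hh hB, ?_⟩⟩
  rintro t ⟨ht, hd⟩
  exact hd.eq_build ht.1.1
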